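/- arXiv:1303.3545 — 5 statements merged into one kernel-verified Lean document; each statement's English description precedes it below -/
import Mathlib

section
/- For every real number r > 1, the series ∑_{l≥0} ((l-1)/((l+2)(2l+1))) r^{-2l-2} converges and equals -1 - r^2 log((r^2-1)/r^2) - (1/(2r)) log((r+1)/(r-1)). -/
/-! With `x = r⁻²` the coefficient splits as `1/(l+2) - 1/(2l+1)`, so the series is
`r² ∑ x^(l+2)/(l+2) - r⁻¹ ∑ r⁻¹^(2l+1)/(2l+1)`: a tail of the Mercator series of `-log (1 - x)`
minus `r⁻¹ artanh r⁻¹`, where `artanh r⁻¹ = ½ log ((r + 1)/(r - 1))`. -/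

open Real

theorem Real.hasSum_pow_add_two_div_add_two {x : ℝ} (h : |x| < 1) :
    HasSum (fun l : ℕ => x ^ (l + 2) / (l + 2)) (-log (1 - x) - x) := by
  have h₁ := (hasSum_nat_add_iff' 1).mpr (hasSum_pow_div_log_of_abs_lt_one h)
  simp only [Finset.sum_range_one, Nat.cast_zero, zero_add, pow_one, div_one] at h₁
  exact h₁.congr_fun fun l => by push_cast; ring

theorem Real.hasSum_pow_two_mul_add_one_div {y : ℝ} (h : |y| < 1) :
    HasSum (fun l : ℕ => y ^ (2 * l + 1) / (2 * l + 1)) ((log (1 + y) - log (1 - y)) / 2) :=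
  ((hasSum_log_sub_log_of_abs_lt_one h).div_const 2).congr_fun fun l => by ring

theorem sub_one_div_mul_eq_div_sub_div {K : Type*} [Field K] {l : K} (h₁ : l + 2 ≠ 0)
    (h₂ : 2 * l + 1 ≠ 0) :
    (l - 1) / ((l + 2) * (2 * l + 1)) = 1 / (l + 2) - 1 / (2 * l + 1) := by
  rw [div_sub_div _ _ h₁ h₂]
  ring

theorem Real.log_one_add_inv_sub_log_one_sub_inv {r : ℝ} (hr : 1 < r) :
    log (1 + r⁻¹) - log (1 - r⁻¹) = log ((r + 1) / (r - 1)) := by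
  have hr₀ : 0 < r := by linarith
  rw [← log_div (by positivity) (sub_ne_zero.mpr (inv_lt_one_of_one_lt₀ hr).ne')]
  congr 1
  field_simp

theorem sum_sub_one_div_mul (r : ℝ) (hr : 1 < r) :
    HasSum (fun l : ℕ => (((l : ℝ) - 1) / (((l : ℝ) + 2) * (2 * (l : ℝ) + 1))) * (r ^ (2 * l + 2))⁻¹)
      (-1 - r ^ 2 * Real.log ((r ^ 2 - 1) / r ^ 2)
        - (1 / (2 * r)) * Real.log ((r + 1) / (r - 1))) := by
  have hr₀ : 0 < r := by linarith
  have hy : |r⁻¹| < 1 := by rw [abs_inv, abs_of_pos hr₀]; exact inv_lt_one_of_one_lt₀ hr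
  have hx : |r⁻¹ ^ 2| < 1 := by rw [abs_pow]; exact pow_lt_one₀ (abs_nonneg _) hy two_ne_zero
  have hmercator := (hasSum_pow_add_two_div_add_two hx).mul_left (r ^ 2)
  have hartanh := (hasSum_pow_two_mul_add_one_div hy).mul_left r⁻¹
  have hvalue : -1 - r ^ 2 * log ((r ^ 2 - 1) / r ^ 2) - 1 / (2 * r) * log ((r + 1) / (r - 1))
      = r ^ 2 * (-log (1 - r⁻¹ ^ 2) - r⁻¹ ^ 2) - r⁻¹ * ((log (1 + r⁻¹) - log (1 - r⁻¹)) / 2) := by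
    rw [log_one_add_inv_sub_log_one_sub_inv hr, show 1 - r⁻¹ ^ 2 = (r ^ 2 - 1) / r ^ 2 by field_simp,
      inv_pow, mul_sub, mul_inv_cancel₀ (by positivity)]
    ring
  rw [hvalue]
  refine (hmercator.sub hartanh).congr_fun fun l => ?_
  rw [sub_one_div_mul_eq_div_sub_div (by positivity) (by positivity)]
  simp only [inv_pow, ← pow_mul]
  field_simp
  ring
end

section
/- For every real number r > 1, the quantity 32 r^2 log((r^2-1)/r^2) + (15 r + 1/r) log((r+1)/(r-1)) + 2 (r^2+1)/(r^2-1) is strictly positive. -/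
/-!
Put `t = 1 / r ∈ (0, 1)`. The expression becomes
`32 / t² · log (1 - t²) + (15 / t + t) · log ((1 + t) / (1 - t)) + 2 (1 + t²) / (1 - t²)`.
Bound `log (1 - x)` from below by its Taylor polynomial of degree 8 minus the tail
`x⁹ / (9 (1 - x))`, and `log ((1 + t) / (1 - t))` by its odd Taylor polynomial of degree 17.
The lower bound obtained is `t⁶ Q(t²) / (1 - t²)` for an explicit polynomial `Q` of degree 7,
which is positive on `[0, 1]` because it is `4/9` plus nonnegative multiples of `x^k (1 - x)^(7-k)`.
The factor `1/9` in the tail is essential: near `t = 1` the tail contributes `-(32/9) / (1 - t²)`,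
which must be beaten by the `4 / (1 - t²)` of the rational term.
-/

open Finset Real

lemma neg_sum_range_sub_le_log_one_sub {x : ℝ} (h₀ : 0 ≤ x) (h : x < 1) (n : ℕ) :
    -(∑ i ∈ range n, x ^ (i + 1) / (i + 1)) - x ^ (n + 1) / ((n + 1) * (1 - x)) ≤
      log (1 - x) := by
  have hs := hasSum_pow_div_log_of_abs_lt_one (abs_lt.2 ⟨by linarith, h⟩)
  have hsplit := (hs.summable.sum_add_tsum_nat_add n).trans hs.tsum_eq
  have hgeom : HasSum (fun k : ℕ ↦ x ^ (n + 1) / (n + 1) * x ^ k)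
      (x ^ (n + 1) / ((n + 1) * (1 - x))) := by
    rw [← div_div, div_eq_mul_inv _ (1 - x)]
    exact (hasSum_geometric_of_lt_one h₀ h).mul_left _
  have htail : ∑' k : ℕ, x ^ (k + n + 1) / ((k + n : ℕ) + 1) ≤
      x ^ (n + 1) / ((n + 1) * (1 - x)) := by
    refine hasSum_le (fun k ↦ ?_) ((summable_nat_add_iff n).2 hs.summable).hasSum hgeom
    rw [div_mul_eq_mul_div, ← pow_add, show k + n + 1 = n + 1 + k by ring]
    gcongr
    simp
  linarith

lemma radial_lower_bound_numerator_pos {x : ℝ} (h₀ : 0 ≤ x) (h₁ : x ≤ 1) :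
    0 < 24/35 + 8/15*x + 1376/3465*x^2 + 2720/9009*x^3 + 236/1001*x^4
        + 1876/9945*x^5 - 454/255*x^6 - 2/17*x^7 := by
  rw [show 24/35 + 8/15*x + 1376/3465*x^2 + 2720/9009*x^3 + 236/1001*x^4
        + 1876/9945*x^5 - 454/255*x^6 - 2/17*x^7
      = 4/9 + 76/315*(1-x)^7 + 20/9*x*(1-x)^6 + 6004/693*x^2*(1-x)^5
          + 8036/429*x^3*(1-x)^4 + 220952/9009*x^4*(1-x)^3 + 5040076/255255*x^5*(1-x)^2
          + 269342/36465*x^6*(1-x) by ring]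
  have hy : 0 ≤ 1 - x := by linarith
  generalize 1 - x = y at *
  positivity

lemma radial_expression_inv_pos {t : ℝ} (h₀ : 0 < t) (h₁ : t < 1) :
    0 < 32 / t ^ 2 * log (1 - t ^ 2) + (15 / t + t) * log ((1 + t) / (1 - t))
        + 2 * (1 + t ^ 2) / (1 - t ^ 2) := by
  have hsq : t ^ 2 < 1 := by nlinarith
  have hQ := radial_lower_bound_numerator_pos (sq_nonneg t) hsq.le
  calc 0 < t ^ 6 * (24/35 + 8/15*t^2 + 1376/3465*(t^2)^2 + 2720/9009*(t^2)^3
          + 236/1001*(t^2)^4 + 1876/9945*(t^2)^5 - 454/255*(t^2)^6 - 2/17*(t^2)^7)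
          / (1 - t ^ 2) := by
        have : 0 < 1 - t ^ 2 := by linarith
        positivity
    _ = 32 / t ^ 2 * (-(∑ i ∈ range 8, (t ^ 2) ^ (i + 1) / (i + 1))
          - (t ^ 2) ^ (8 + 1) / ((8 + 1) * (1 - t ^ 2)))
        + (15 / t + t) * (2 * ∑ i ∈ range 9, t ^ (2 * i + 1) / (2 * i + 1))
        + 2 * (1 + t ^ 2) / (1 - t ^ 2) := by
        have : 1 - t ^ 2 ≠ 0 := by linarith
        simp only [sum_range_succ, sum_range_zero]
        field_simp
        ring
    _ ≤ _ := by
        gcongr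
        · exact neg_sum_range_sub_le_log_one_sub (sq_nonneg t) hsq 8
        · linarith [sum_range_le_log_div h₀.le h₁ 9]

theorem radial_expression_pos (r : ℝ) (hr : 1 < r) :
    0 < 32 * r ^ 2 * Real.log ((r ^ 2 - 1) / r ^ 2)
        + (15 * r + 1 / r) * Real.log ((r + 1) / (r - 1))
        + 2 * (r ^ 2 + 1) / (r ^ 2 - 1) := by
  have hr₀ : r ≠ 0 := by positivity
  have hr₁ : r - 1 ≠ 0 := by linarith
  have hr₂ : r ^ 2 - 1 ≠ 0 := by nlinarith
  have hlog₁ : (r ^ 2 - 1) / r ^ 2 = 1 - r⁻¹ ^ 2 := by field_simp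
  have hlog₂ : (r + 1) / (r - 1) = (1 + r⁻¹) / (1 - r⁻¹) := by field_simp
  convert radial_expression_inv_pos (inv_pos.2 (zero_lt_one.trans hr))
    (inv_lt_one_of_one_lt₀ hr) using 1
  rw [hlog₁, hlog₂]
  field_simp
end

section
/- Let ξ ∈ ℝ^3 with |ξ| > 1 and λ > 0, and let B = {x ∈ ℝ^3 : |x - λξ| ≤ λ}. Then the integral of |x|^{-2} over B with respect to Lebesgue measure equals 2π λ (1 - ((|ξ|^2-1)/(2|ξ|)) log((|ξ|+1)/(|ξ|-1))). -/
/-!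
Write `c = d • u` with `‖u‖ = 1` and slice `closedBall c r` by the affine planes
`t • u + (ℝ ∙ u)ᗮ`. By Pythagoras the slice at height `t ∈ [d - r, d + r]` is a disk of radius
`ρ`, `ρ² = r² - (t - d)²`, on which `‖x‖² = t² + ‖w‖²`; integrating in polar coordinates gives
`π (log (t² + ρ²) - log t²)`. Since `t² + ρ² = 2 d t + r² - d²` is affine in `t`, the remaining
integral over `[d - r, d + r]` reduces to `∫ log`.
-/

open MeasureTheory Real Metric Module Set

noncomputable abbrev E3 : Type := EuclideanSpace ℝ (Fin 3)

lemma integral_mul_inv_add_sq {s : ℝ} (hs : 0 < s) (R : ℝ) :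
    ∫ r in (0 : ℝ)..R, r * (s + r ^ 2)⁻¹ = (log (s + R ^ 2) - log s) / 2 := by
  have hpos (r : ℝ) : 0 < s + r ^ 2 := by positivity
  have hderiv (r : ℝ) : HasDerivAt (fun r => log (s + r ^ 2) / 2) (r * (s + r ^ 2)⁻¹) r := by
    refine ((((hasDerivAt_pow 2 r).const_add s).log (hpos r).ne').div_const 2).congr_deriv ?_
    field_simp
    ring
  rw [intervalIntegral.integral_eq_sub_of_hasDerivAt (fun r _ => hderiv r)]
  · simp [sub_div]
  · refine (continuous_id.mul ?_).intervalIntegrable _ _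
    exact (continuous_const.add (continuous_pow 2)).inv₀ fun r => (hpos r).ne'

lemma integral_log_add_sq_sub_log_sq {d r : ℝ} (hr : 0 ≤ r) (hrd : r < d) :
    ∫ t in (d - r)..(d + r), (log (r ^ 2 - (t - d) ^ 2 + t ^ 2) - log (t ^ 2))
      = 2 * r - (d ^ 2 - r ^ 2) / d * log ((d + r) / (d - r)) := by
  have hd : 0 < d := hr.trans_lt hrd
  have hchord (t : ℝ) : r ^ 2 - (t - d) ^ 2 + t ^ 2 = 2 * d * t + (r ^ 2 - d ^ 2) := by ring
  have hpos : ∀ t ∈ uIcc (d - r) (d + r), 0 < 2 * d * t + (r ^ 2 - d ^ 2) := by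
    intro t ht
    rw [uIcc_of_le (by linarith)] at ht
    nlinarith [ht.1]
  have hint₁ : IntervalIntegrable (fun t => log (2 * d * t + (r ^ 2 - d ^ 2))) volume
      (d - r) (d + r) :=
    (ContinuousOn.log (by fun_prop) fun t ht => (hpos t ht).ne').intervalIntegrable
  have hint₂ : IntervalIntegrable (fun t => 2 * log t) volume (d - r) (d + r) :=
    intervalIntegral.intervalIntegrable_log'.const_mul 2
  simp_rw [hchord, log_pow, Nat.cast_ofNat]
  rw [intervalIntegral.integral_sub hint₁ hint₂,
    intervalIntegral.integral_comp_mul_add (fun t => log t) (by positivity : 2 * d ≠ 0),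
    intervalIntegral.integral_const_mul, integral_log, integral_log,
    show 2 * d * (d - r) + (r ^ 2 - d ^ 2) = (d - r) ^ 2 by ring,
    show 2 * d * (d + r) + (r ^ 2 - d ^ 2) = (d + r) ^ 2 by ring,
    log_pow, log_pow, log_div (by linarith) (by linarith), smul_eq_mul]
  field_simp
  ring

section Disk

variable {W : Type*} [NormedAddCommGroup W] [InnerProductSpace ℝ W] [FiniteDimensional ℝ W]
  [MeasurableSpace W] [BorelSpace W]

lemma setIntegral_closedBall_inv_add_norm_sq (hW : finrank ℝ W = 2) {s R : ℝ} (hs : 0 < s)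
    (hR : 0 ≤ R) :
    ∫ w in closedBall (0 : W) R, (s + ‖w‖ ^ 2)⁻¹ = π * (log (s + R ^ 2) - log s) := by
  have : Nontrivial W := Module.nontrivial_of_finrank_pos (R := ℝ) (by omega)
  have hball : volume.real (ball (0 : W) 1) = π := by
    simp [measureReal_def, InnerProductSpace.volume_ball_of_dim_even (k := 1) hW, pi_nonneg]
  have hind : (closedBall (0 : W) R).indicator (fun w => (s + ‖w‖ ^ 2)⁻¹)
      = fun w => (Iic R).indicator (fun r => (s + r ^ 2)⁻¹) ‖w‖ := by
    ext w
    simp [indicator, mem_closedBall]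
  have hradial : (fun r : ℝ => r ^ (2 - 1) • (Iic R).indicator (fun r => (s + r ^ 2)⁻¹) r)
      = (Iic R).indicator (fun r => r * (s + r ^ 2)⁻¹) := by
    ext r
    simp [indicator]
  rw [← integral_indicator measurableSet_closedBall, hind, integral_fun_norm_addHaar, hW, hball,
    hradial, setIntegral_indicator measurableSet_Iic, Ioi_inter_Iic,
    ← intervalIntegral.integral_of_le hR, integral_mul_inv_add_sq hs]
  simp only [nsmul_eq_mul, smul_eq_mul]
  ring

end Disk

section Slicing

variable {V : Type*} [NormedAddCommGroup V] [InnerProductSpace ℝ V] {u : V}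

lemma norm_smul_add_orthogonal_sq (hu : ‖u‖ = 1) (t : ℝ) (w : (ℝ ∙ u)ᗮ) :
    ‖t • u + (w : V)‖ ^ 2 = t ^ 2 + ‖w‖ ^ 2 := by
  rw [norm_add_sq_real, real_inner_smul_left,
    Submodule.mem_orthogonal_singleton_iff_inner_right.mp w.2, norm_smul, hu]
  simp

variable [FiniteDimensional ℝ V]

noncomputable def lineOrthogonalIsometry (u : V) (hu : ‖u‖ = 1) :
    WithLp 2 (ℝ × (ℝ ∙ u)ᗮ) ≃ₗᵢ[ℝ] V :=
  (LinearIsometryEquiv.withLpProdCongr 2 (LinearIsometryEquiv.toSpanUnitSingleton u hu)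
      (LinearIsometryEquiv.refl ℝ _)).trans (ℝ ∙ u).orthogonalDecomposition.symm

variable [MeasurableSpace V] [BorelSpace V]

noncomputable def lineOrthogonalEquiv (u : V) (hu : ‖u‖ = 1) : ℝ × (ℝ ∙ u)ᗮ ≃ᵐ V :=
  (MeasurableEquiv.toLp 2 _).trans (lineOrthogonalIsometry u hu).toHomeomorph.toMeasurableEquiv

@[simp]
lemma lineOrthogonalEquiv_apply (hu : ‖u‖ = 1) (p : ℝ × (ℝ ∙ u)ᗮ) :
    lineOrthogonalEquiv u hu p = p.1 • u + p.2 := by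
  simp [lineOrthogonalEquiv, lineOrthogonalIsometry]

lemma measurePreserving_lineOrthogonalEquiv (hu : ‖u‖ = 1) :
    MeasurePreserving (lineOrthogonalEquiv u hu) :=
  ((lineOrthogonalIsometry u hu).measurePreserving.comp (WithLp.volume_preserving_toLp ℝ _) :)

variable {F : Type*} [NormedAddCommGroup F] [NormedSpace ℝ F]

lemma integral_eq_integral_integral_orthogonal (hu : ‖u‖ = 1) {f : V → F} (hf : Integrable f) :
    ∫ x, f x = ∫ t : ℝ, ∫ w : (ℝ ∙ u)ᗮ, f (t • u + w) := by
  have hmp := measurePreserving_lineOrthogonalEquiv hu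
  have hf' := (hmp.integrable_comp_emb (lineOrthogonalEquiv u hu).measurableEmbedding).mpr hf
  rw [Measure.volume_eq_prod] at hf'
  rw [← hmp.integral_comp', Measure.volume_eq_prod]
  simpa using integral_prod _ hf'

lemma setIntegral_eq_integral_setIntegral_orthogonal (hu : ‖u‖ = 1) {s : Set V}
    (hs : MeasurableSet s) {f : V → F} (hf : IntegrableOn f s) :
    ∫ x in s, f x = ∫ t : ℝ, ∫ w in {w : (ℝ ∙ u)ᗮ | t • u + (w : V) ∈ s}, f (t • u + w) := by
  rw [← integral_indicator hs,
    integral_eq_integral_integral_orthogonal hu (hf.integrable_indicator hs)]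
  congr 1 with t
  have hslice : MeasurableSet {w : (ℝ ∙ u)ᗮ | t • u + (w : V) ∈ s} := hs.preimage (by fun_prop)
  rw [← integral_indicator hslice]
  rfl

lemma setIntegral_slice_closedBall_inv_norm_sq (hV : finrank ℝ V = 3) (hu : ‖u‖ = 1) {d r : ℝ}
    (hr : 0 ≤ r) (hrd : r < d) (t : ℝ) :
    ∫ w in {w : (ℝ ∙ u)ᗮ | t • u + (w : V) ∈ closedBall (d • u) r}, (‖t • u + (w : V)‖ ^ 2)⁻¹
      = (Icc (d - r) (d + r)).indicator
          (fun t => π * (log (r ^ 2 - (t - d) ^ 2 + t ^ 2) - log (t ^ 2))) t := by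
  have : Fact (finrank ℝ V = 2 + 1) := ⟨hV⟩
  have hW : finrank ℝ (ℝ ∙ u)ᗮ = 2 :=
    Submodule.finrank_orthogonal_span_singleton (norm_ne_zero_iff.mp (hu ▸ one_ne_zero))
  have hslice : {w : (ℝ ∙ u)ᗮ | t • u + (w : V) ∈ closedBall (d • u) r}
      = {w | ‖w‖ ^ 2 ≤ r ^ 2 - (t - d) ^ 2} := by
    ext w
    rw [mem_ofPred_eq, mem_closedBall, dist_eq_norm,
      show t • u + (w : V) - d • u = (t - d) • u + w by module, ← sq_le_sq₀ (norm_nonneg _) hr,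
      norm_smul_add_orthogonal_sq hu, mem_ofPred_eq]
    exact le_sub_iff_add_le'.symm
  simp_rw [hslice, norm_smul_add_orthogonal_sq hu]
  by_cases ht : t ∈ Icc (d - r) (d + r)
  · have hR : 0 ≤ r ^ 2 - (t - d) ^ 2 := by nlinarith [ht.1, ht.2]
    have hball : {w : (ℝ ∙ u)ᗮ | ‖w‖ ^ 2 ≤ r ^ 2 - (t - d) ^ 2}
        = closedBall 0 √(r ^ 2 - (t - d) ^ 2) := by
      ext w
      rw [mem_ofPred_eq, mem_closedBall_zero_iff, le_sqrt (norm_nonneg _) hR]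
    rw [indicator_of_mem ht, hball, setIntegral_closedBall_inv_add_norm_sq hW
      (by nlinarith [ht.1] : 0 < t ^ 2) (sqrt_nonneg _), sq_sqrt hR, add_comm (t ^ 2)]
  · have hempty : {w : (ℝ ∙ u)ᗮ | ‖w‖ ^ 2 ≤ r ^ 2 - (t - d) ^ 2} = ∅ := by
      refine eq_empty_of_forall_notMem fun w hw => ht ?_
      have : (t - d) ^ 2 ≤ r ^ 2 := by nlinarith [sq_nonneg ‖w‖, hw.out]
      constructor <;> nlinarith
    rw [indicator_of_notMem ht, hempty, Measure.restrict_empty, integral_zero_measure]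

theorem setIntegral_closedBall_inv_norm_sq (hV : finrank ℝ V = 3) {c : V} {r : ℝ} (hr : 0 ≤ r)
    (hrc : r < ‖c‖) :
    ∫ x in closedBall c r, (‖x‖ ^ 2)⁻¹
      = π * (2 * r - (‖c‖ ^ 2 - r ^ 2) / ‖c‖ * log ((‖c‖ + r) / (‖c‖ - r))) := by
  set d := ‖c‖
  have hd : d ≠ 0 := by linarith
  set u := d⁻¹ • c
  have hu : ‖u‖ = 1 := by rw [norm_smul, norm_inv, norm_norm, inv_mul_cancel₀ hd]
  have hc : c = d • u := by simp [u, smul_smul, hd]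
  have hint : IntegrableOn (fun x : V => (‖x‖ ^ 2)⁻¹) (closedBall c r) := by
    refine ContinuousOn.integrableOn_compact (isCompact_closedBall c r) ?_
    refine ContinuousOn.inv₀ (by fun_prop) fun x hx => ?_
    have hcx := norm_sub_norm_le c x
    rw [mem_closedBall, dist_comm, dist_eq_norm] at hx
    exact pow_ne_zero 2 (by linarith)
  rw [setIntegral_eq_integral_setIntegral_orthogonal hu measurableSet_closedBall hint, hc]
  simp_rw [setIntegral_slice_closedBall_inv_norm_sq hV hu hr hrc]
  rw [integral_indicator measurableSet_Icc, integral_Icc_eq_integral_Ioc,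
    ← intervalIntegral.integral_of_le (by linarith), intervalIntegral.integral_const_mul,
    integral_log_add_sq_sub_log_sq hr hrc]

end Slicing

theorem ball_integral_inv_sq (ξ : E3) (hξ : 1 < ‖ξ‖) (lam : ℝ) (hlam : 0 < lam) :
    ∫ x in Metric.closedBall (lam • ξ) lam, (‖x‖ ^ 2)⁻¹
      = 2 * π * lam * (1 - ((‖ξ‖ ^ 2 - 1) / (2 * ‖ξ‖)) * Real.log ((‖ξ‖ + 1) / (‖ξ‖ - 1))) := by
  have hnorm : ‖lam • ξ‖ = lam * ‖ξ‖ := by rw [norm_smul, norm_of_nonneg hlam.le]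
  rw [setIntegral_closedBall_inv_norm_sq finrank_euclideanSpace_fin hlam.le
    (by rw [hnorm]; nlinarith), hnorm, show lam * ‖ξ‖ + lam = lam * (‖ξ‖ + 1) by ring,
    show lam * ‖ξ‖ - lam = lam * (‖ξ‖ - 1) by ring, mul_div_mul_left _ _ hlam.ne']
  field_simp
end

section
/- Let G : [1,∞) → ℝ be continuously differentiable and K : [1,∞) → ℝ satisfy: K(s) ≥ 0 for all s ≥ 1, K(s) ≤ K(1)/s for all s ≥ 1, s G'(s) = G(s) + K(s) for all s ≥ 1, and G(s)/s + K(1)/(2s^2) → 0 as s → ∞. Then G'(1) ≥ 0. -/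
/-! The ODE gives `(G(s)/s)' = K(s)/s²`, and adding `K(1)/(2s²)` turns this into
`K(s)/s² - K(1)/s³ ≤ 0`. So `G(s)/s + K(1)/(2s²)` decreases to its limit `0`, whence
`G(1) + K(1)/2 ≥ 0` and `G'(1) = G(1) + K(1) ≥ 0`. -/

open Filter Set Topology

lemma le_of_tendsto_of_hasDerivAt_nonpos {f f' : ℝ → ℝ} {a L : ℝ}
    (hf : ∀ x, a ≤ x → HasDerivAt f (f' x) x) (hf' : ∀ x, a < x → f' x ≤ 0)
    (hlim : Tendsto f atTop (𝓝 L)) : L ≤ f a := by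
  have hanti : AntitoneOn f (Ici a) := by
    refine antitoneOn_of_hasDerivWithinAt_nonpos (f' := f') (convex_Ici a)
      (fun x hx => (hf x hx).continuousAt.continuousWithinAt) (fun x hx => ?_) (fun x hx => ?_)
    · rw [interior_Ici] at hx
      exact (hf x hx.le).hasDerivWithinAt
    · rw [interior_Ici] at hx
      exact hf' x hx
  refine le_of_tendsto hlim ?_
  filter_upwards [eventually_ge_atTop a] with x hx
  exact hanti self_mem_Ici hx hx

lemma hasDerivAt_div_self_add_const_div_two_mul_sq {G : ℝ → ℝ} {g s : ℝ} (c : ℝ)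
    (hG : HasDerivAt G g s) (hs : s ≠ 0) :
    HasDerivAt (fun x => G x / x + c / (2 * x ^ 2)) ((s * g - G s) / s ^ 2 - c / s ^ 3) s := by
  have hsq : HasDerivAt (fun x : ℝ => 2 * x ^ 2) (2 * (2 * s)) s := by
    simpa using (hasDerivAt_pow 2 s).const_mul 2
  refine ((hG.div (hasDerivAt_id' s) hs).add
    ((hasDerivAt_const s c).div hsq (by positivity))).congr_deriv ?_
  field_simp
  ring

theorem ode_comparison_general (G G' K : ℝ → ℝ)
    (hderiv : ∀ s : ℝ, 1 ≤ s → HasDerivAt G (G' s) s)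
    (hK0 : ∀ s : ℝ, 1 ≤ s → 0 ≤ K s)
    (hK1 : ∀ s : ℝ, 1 ≤ s → K s ≤ K 1 / s)
    (hode : ∀ s : ℝ, 1 ≤ s → s * G' s = G s + K s)
    (hlim : Tendsto (fun s : ℝ => G s / s + K 1 / (2 * s ^ 2)) atTop (nhds 0)) :
    0 ≤ G' 1 := by
  have hdecr : ∀ s : ℝ, 1 < s → (s * G' s - G s) / s ^ 2 - K 1 / s ^ 3 ≤ 0 := by
    intro s hs
    have hs0 : 0 < s := by linarith
    calc (s * G' s - G s) / s ^ 2 - K 1 / s ^ 3 = (K s - K 1 / s) / s ^ 2 := by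
          rw [hode s hs.le]; field_simp; ring
      _ ≤ 0 := div_nonpos_of_nonpos_of_nonneg (by linarith [hK1 s hs.le]) (by positivity)
  have hvalue_one : 0 ≤ G 1 / 1 + K 1 / (2 * 1 ^ 2) :=
    le_of_tendsto_of_hasDerivAt_nonpos (a := 1)
      (fun s hs => hasDerivAt_div_self_add_const_div_two_mul_sq (K 1) (hderiv s hs)
        (by positivity)) hdecr hlim
  linarith [hode 1 le_rfl, hK0 1 le_rfl]

theorem ode_comparison (G G' K : ℝ → ℝ)
    (hderiv : ∀ s : ℝ, 1 ≤ s → HasDerivAt G (G' s) s)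
    (hcont : ContinuousOn G' (Set.Ici (1 : ℝ)))
    (hK0 : ∀ s : ℝ, 1 ≤ s → 0 ≤ K s)
    (hK1 : ∀ s : ℝ, 1 ≤ s → K s ≤ K 1 / s)
    (hode : ∀ s : ℝ, 1 ≤ s → s * G' s = G s + K s)
    (hlim : Tendsto (fun s : ℝ => G s / s + K 1 / (2 * s ^ 2)) atTop (nhds 0)) :
    0 ≤ G' 1 :=
  ode_comparison_general G G' K hderiv hK0 hK1 hode hlim
end

section
/- Let F : ℝ^3 \ B̄_1(0) → ℝ be given by F(ξ) = -14 + 16|ξ|^2 log((|ξ|^2-1)/|ξ|^2) + (15|ξ| - |ξ|^{-1}) log((|ξ|+1)/(|ξ|-1)) (i.e., the function F of the paper with T ≡ 0, up to the factor 2π). Then for every ξ with |ξ| > 1, the radial derivative satisfies (d/ds) F(sξ)|_{s=1} = 32|ξ|^2 log((|ξ|^2-1)/|ξ|^2) + (15|ξ| + |ξ|^{-1}) log((|ξ|+1)/(|ξ|-1)) + 2(|ξ|^2+1)/(|ξ|^2-1), and this quantity is strictly positive; in particular F has no critical points in {|ξ| > 1}. -/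
/-!
Along a ray, `F (s • ξ) = f (s * ‖ξ‖)` for the radial profile `f`, so the radial derivative is
`r * f' r`, a direct computation. For its sign put `y = 1 / r ∈ (0, 1)`, so that
`log ((r + 1) / (r - 1)) = 2 * artanh y` and `r * f' r = G y / y ^ 2` with
`G = rescaledRadialDerivative`. Then `G 0 = 0` and `G' = 2 H / (1 - y ^ 2) ^ 2`, where `H > 0` is
the last of three increasingly sharp rational bounds on `artanh`. Each bound, like `G > 0`, holds
because both sides agree at `0` and the derivative of the difference is positive on `(0, 1)` by
the previous bound. A nonzero directional derivative excludes critical points.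
-/

open Real

open Set Filter Topology

lemma pos_of_hasDerivAt_pos {f f' : ℝ → ℝ} {a b : ℝ} (hfa : f a = 0)
    (hf : ∀ x ∈ Ico a b, HasDerivAt f (f' x) x) (hf' : ∀ x ∈ Ioo a b, 0 < f' x) :
    ∀ x ∈ Ioo a b, 0 < f x := by
  have hmono : StrictMonoOn f (Ico a b) := by
    refine strictMonoOn_of_hasDerivWithinAt_pos (f' := f') (convex_Ico a b)
      (fun x hx => (hf x hx).continuousAt.continuousWithinAt) (fun x hx => ?_) ?_
    · rw [interior_Ico] at hx ⊢
      exact (hf x (Ioo_subset_Ico_self hx)).hasDerivWithinAt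
    · rwa [interior_Ico]
  intro x hx
  simpa [hfa] using hmono (left_mem_Ico.2 (hx.1.trans hx.2)) (Ioo_subset_Ico_self hx) hx.1

lemma Real.hasDerivAt_artanh {x : ℝ} (hx : x ∈ Ioo (-1) 1) :
    HasDerivAt artanh (1 / (1 - x ^ 2)) x := by
  obtain ⟨h₁, h₂⟩ := hx
  have hlog : HasDerivAt (fun x => 1 / 2 * log ((1 + x) / (1 - x))) (1 / (1 - x ^ 2)) x := by
    have hp : 0 < 1 + x := by linarith
    have hm : 0 < 1 - x := by linarith
    have hq := ((hasDerivAt_id' x).const_add 1).div ((hasDerivAt_id' x).const_sub 1) hm.ne'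
    refine ((hq.log (div_pos hp hm).ne').const_mul (1 / 2)).congr_deriv ?_
    have : 1 - x ^ 2 ≠ 0 := by nlinarith
    simp only [Pi.div_apply]
    field_simp
    ring
  refine hlog.congr_of_eventuallyEq ?_
  filter_upwards [Ioo_mem_nhds h₁ h₂] with y hy
  exact artanh_eq_half_log (Ioo_subset_Icc_self hy)

lemma Real.lt_artanh {y : ℝ} (hy : y ∈ Ioo 0 1) : y < artanh y := by
  have := pos_of_hasDerivAt_pos (f := fun y => artanh y - y) (f' := fun y => 1 / (1 - y ^ 2) - 1)
    (a := 0) (b := 1) (by simp)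
    (fun x hx => (hasDerivAt_artanh ⟨by linarith [hx.1], hx.2⟩).sub (hasDerivAt_id x))
    (fun x ⟨h₀, h₁⟩ => by
      have : 0 < 1 - x ^ 2 := by nlinarith
      rw [sub_pos, lt_div_iff₀ this]; nlinarith) y hy
  linarith

lemma Real.mul_artanh_lt {y : ℝ} (hy : y ∈ Ioo 0 1) :
    (3 + y ^ 2) * (1 - y ^ 2) * artanh y < y * (3 - y ^ 2) := by
  have hpos := pos_of_hasDerivAt_pos
    (f := fun y => y * (3 - y ^ 2) - (3 + y ^ 2) * (1 - y ^ 2) * artanh y)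
    (f' := fun y => 4 * y * ((1 + y ^ 2) * artanh y - y)) (by simp)
    (fun x ⟨h₀, h₁⟩ => by
      have hx : 1 - x ^ 2 ≠ 0 := by nlinarith
      have hp := (hasDerivAt_id' x).mul ((hasDerivAt_pow 2 x).const_sub 3)
      have hq := (((hasDerivAt_pow 2 x).const_add 3).mul ((hasDerivAt_pow 2 x).const_sub 1)).mul
        (hasDerivAt_artanh ⟨by linarith, h₁⟩)
      refine (hp.sub hq).congr_deriv ?_
      simp only [Pi.mul_apply]
      field_simp
      ring)
    (fun x ⟨h₀, h₁⟩ => by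
      have := lt_artanh ⟨h₀, h₁⟩
      have : 0 < (1 + x ^ 2) * artanh x - x := by nlinarith
      positivity) y hy
  linarith

lemma Real.lt_mul_artanh {y : ℝ} (hy : y ∈ Ioo 0 1) :
    15 * y - 22 * y ^ 3 + 3 * y ^ 5 < (15 + 3 * y ^ 2) * (1 - y ^ 2) ^ 2 * artanh y := by
  have hpos := pos_of_hasDerivAt_pos
    (f := fun y => (15 + 3 * y ^ 2) * (1 - y ^ 2) ^ 2 * artanh y - (15 * y - 22 * y ^ 3 + 3 * y ^ 5))
    (f' := fun y => 18 * y * (y * (3 - y ^ 2) - (3 + y ^ 2) * (1 - y ^ 2) * artanh y)) (by simp)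
    (fun x ⟨h₀, h₁⟩ => by
      have hx : 1 - x ^ 2 ≠ 0 := by nlinarith
      have hp := ((((hasDerivAt_pow 2 x).const_mul 3).const_add 15).mul
        (((hasDerivAt_pow 2 x).const_sub 1).pow 2)).mul (hasDerivAt_artanh ⟨by linarith, h₁⟩)
      have hq := (((hasDerivAt_id' x).const_mul 15).sub ((hasDerivAt_pow 3 x).const_mul 22)).add
        ((hasDerivAt_pow 5 x).const_mul 3)
      refine (hp.sub hq).congr_deriv ?_
      simp only [Pi.mul_apply, Pi.pow_apply]
      field_simp
      ring)
    (fun x hx => by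
      have := mul_artanh_lt hx
      have := hx.1
      nlinarith) y hy
  linarith

noncomputable def radialProfile (r : ℝ) : ℝ :=
  -14 + 16 * r ^ 2 * log ((r ^ 2 - 1) / r ^ 2) + (15 * r - r⁻¹) * log ((r + 1) / (r - 1))

noncomputable def radialDerivative (r : ℝ) : ℝ :=
  32 * r ^ 2 * log ((r ^ 2 - 1) / r ^ 2) + (15 * r + r⁻¹) * log ((r + 1) / (r - 1))
    + 2 * (r ^ 2 + 1) / (r ^ 2 - 1)

noncomputable def rescaledRadialDerivative (y : ℝ) : ℝ :=
  32 * log (1 - y ^ 2) + 2 * (15 * y + y ^ 3) * artanh y + 2 * y ^ 2 * (1 + y ^ 2) / (1 - y ^ 2)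

lemma hasDerivAt_radialProfile {r : ℝ} (hr : 1 < r) :
    HasDerivAt radialProfile (radialDerivative r / r) r := by
  have h₀ : r ≠ 0 := by positivity
  have h₁ : r - 1 ≠ 0 := by linarith
  have h₂ : r ^ 2 - 1 ≠ 0 := by nlinarith
  have hA := (((hasDerivAt_pow 2 r).sub_const 1).div (hasDerivAt_pow 2 r) (by positivity)).log
    (div_ne_zero h₂ (by positivity))
  have hB := (((hasDerivAt_id' r).add_const 1).div ((hasDerivAt_id' r).sub_const 1) h₁).log
    (div_ne_zero (by linarith) h₁)
  have h := (((hasDerivAt_pow 2 r).const_mul 16).mul hA).const_add (-14) |>.add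
    ((((hasDerivAt_id' r).const_mul 15).sub (hasDerivAt_inv h₀)).mul hB)
  refine h.congr_deriv ?_
  simp only [Pi.sub_apply, Pi.div_apply, radialDerivative]
  field_simp
  ring

lemma radialDerivative_inv {y : ℝ} (hy : y ∈ Ioo 0 1) :
    radialDerivative y⁻¹ = rescaledRadialDerivative y / y ^ 2 := by
  obtain ⟨h₀, h₁⟩ := hy
  have h₂ : 1 - y ^ 2 ≠ 0 := by nlinarith
  have hlog₁ : (y⁻¹ ^ 2 - 1) / y⁻¹ ^ 2 = 1 - y ^ 2 := by field_simp
  have hlog₂ : log ((y⁻¹ + 1) / (y⁻¹ - 1)) = 2 * artanh y := by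
    rw [artanh_eq_half_log ⟨by linarith, h₁.le⟩]
    field_simp
  rw [radialDerivative, rescaledRadialDerivative, hlog₁, hlog₂]
  field_simp

lemma rescaledRadialDerivative_pos {y : ℝ} (hy : y ∈ Ioo 0 1) :
    0 < rescaledRadialDerivative y := by
  refine pos_of_hasDerivAt_pos (f' := fun y =>
      2 * ((15 + 3 * y ^ 2) * (1 - y ^ 2) ^ 2 * artanh y - (15 * y - 22 * y ^ 3 + 3 * y ^ 5))
        / (1 - y ^ 2) ^ 2) (by simp [rescaledRadialDerivative]) (fun x hx => ?hasDerivAt)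
    (fun x hx => ?pos) y hy
  case hasDerivAt =>
    have hx₂ : 1 - x ^ 2 ≠ 0 := by nlinarith [hx.1, hx.2]
    have hq := (hasDerivAt_pow 2 x).const_sub 1
    have h := ((hq.log hx₂).const_mul 32).add
      ((((hasDerivAt_id' x).const_mul 15).add (hasDerivAt_pow 3 x)).const_mul 2 |>.mul
        (hasDerivAt_artanh ⟨by linarith [hx.1], hx.2⟩)) |>.add
      ((((hasDerivAt_pow 2 x).const_mul 2).mul ((hasDerivAt_pow 2 x).const_add 1)).div hq hx₂)
    refine h.congr_deriv ?_
    simp only [Pi.add_apply, Pi.mul_apply]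
    field_simp
    ring
  case pos =>
    have hH := sub_pos.2 (lt_mul_artanh hx)
    have : 0 < 1 - x ^ 2 := by nlinarith [hx.1, hx.2]
    positivity

lemma radialDerivative_pos {r : ℝ} (hr : 1 < r) : 0 < radialDerivative r := by
  have hy : r⁻¹ ∈ Ioo 0 1 := ⟨by positivity, inv_lt_one_of_one_lt₀ hr⟩
  rw [← inv_inv r, radialDerivative_inv hy]
  exact div_pos (rescaledRadialDerivative_pos hy) (by positivity)

section NormedSpace

variable {E : Type*} [NormedAddCommGroup E] [NormedSpace ℝ E]

lemma hasDerivAt_comp_norm_smul {f : ℝ → ℝ} {f' : ℝ} {ξ : E} (hf : HasDerivAt f f' ‖ξ‖) :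
    HasDerivAt (fun s : ℝ => f ‖s • ξ‖) (f' * ‖ξ‖) 1 := by
  have hnorm : (fun s : ℝ => ‖s • ξ‖) =ᶠ[𝓝 1] fun s => s * ‖ξ‖ := by
    filter_upwards [lt_mem_nhds one_pos] with s hs
    rw [norm_smul, norm_of_nonneg hs.le]
  have hlin : HasDerivAt (fun s : ℝ => s * ‖ξ‖) ‖ξ‖ 1 := by
    simpa using (hasDerivAt_id' (1 : ℝ)).mul_const ‖ξ‖
  exact hf.comp_of_eq 1 (hlin.congr_of_eventuallyEq hnorm) (by simp)

lemma fderiv_ne_zero_of_hasDerivAt_smul {G : Type*} [NormedAddCommGroup G] [NormedSpace ℝ G]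
    {F : E → G} {ξ : E} {d : G} (hF : DifferentiableAt ℝ F ξ)
    (hd : HasDerivAt (fun s : ℝ => F (s • ξ)) d 1) (hd₀ : d ≠ 0) : fderiv ℝ F ξ ≠ 0 := by
  have hline : HasDerivAt (fun s : ℝ => s • ξ) ξ 1 := by
    simpa using (hasDerivAt_id' (1 : ℝ)).smul_const ξ
  have hchain : HasDerivAt (fun s : ℝ => F (s • ξ)) (fderiv ℝ F ξ ξ) 1 :=
    hF.hasFDerivAt.comp_hasDerivAt_of_eq 1 hline (one_smul ℝ ξ).symm
  intro h
  rw [h] at hchain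
  exact hd₀ (hd.unique hchain)

end NormedSpace

theorem radial_derivative_of_F (F : E3 → ℝ)
    (hF : ∀ ξ : E3, 1 < ‖ξ‖ → F ξ =
      -14 + 16 * ‖ξ‖ ^ 2 * Real.log ((‖ξ‖ ^ 2 - 1) / ‖ξ‖ ^ 2)
        + (15 * ‖ξ‖ - ‖ξ‖⁻¹) * Real.log ((‖ξ‖ + 1) / (‖ξ‖ - 1)))
    (ξ : E3) (hξ : 1 < ‖ξ‖) :
    HasDerivAt (fun s : ℝ => F (s • ξ))
        (32 * ‖ξ‖ ^ 2 * Real.log ((‖ξ‖ ^ 2 - 1) / ‖ξ‖ ^ 2)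
          + (15 * ‖ξ‖ + ‖ξ‖⁻¹) * Real.log ((‖ξ‖ + 1) / (‖ξ‖ - 1))
          + 2 * (‖ξ‖ ^ 2 + 1) / (‖ξ‖ ^ 2 - 1)) 1
      ∧ 0 < 32 * ‖ξ‖ ^ 2 * Real.log ((‖ξ‖ ^ 2 - 1) / ‖ξ‖ ^ 2)
          + (15 * ‖ξ‖ + ‖ξ‖⁻¹) * Real.log ((‖ξ‖ + 1) / (‖ξ‖ - 1))
          + 2 * (‖ξ‖ ^ 2 + 1) / (‖ξ‖ ^ 2 - 1)
      ∧ fderiv ℝ F ξ ≠ 0 := by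
  have hprofile := hasDerivAt_radialProfile hξ
  have hFeq : F =ᶠ[𝓝 ξ] radialProfile ∘ norm :=
    eventually_of_mem ((isOpen_lt continuous_const continuous_norm).mem_nhds (by exact hξ)) hF
  have hline : Tendsto (fun s : ℝ => s • ξ) (𝓝 1) (𝓝 ξ) :=
    Continuous.tendsto' (by fun_prop) 1 ξ (one_smul ℝ ξ)
  have hradial : HasDerivAt (fun s : ℝ => F (s • ξ)) (radialDerivative ‖ξ‖) 1 :=
    ((hasDerivAt_comp_norm_smul hprofile).congr_of_eventuallyEq (hFeq.comp_tendsto hline)).congr_deriv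
      (div_mul_cancel₀ _ (by positivity))
  have hdiff : DifferentiableAt ℝ F ξ :=
    hFeq.differentiableAt_iff.2 <| hprofile.differentiableAt.comp ξ <|
      (contDiffAt_norm ℝ (n := 1) (norm_pos_iff.1 (by linarith))).differentiableAt one_ne_zero
  exact ⟨hradial, radialDerivative_pos hξ,
    fderiv_ne_zero_of_hasDerivAt_smul hdiff hradial (radialDerivative_pos hξ).ne'⟩
end
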